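/- Let X be a countable set and let P, H_i, H_j be probability distributions on X. Let S = {x ∈ X : H_i(x) < H_j(x)} be the Scheffé set of the pair (H_i, H_j). Then d_TV(P, H_j) ≤ d_TV(P, H_i) + |H_j(S) − P(S)| + |H_i(S) − P(S)|. (Proposition 1.10, first statement.) -/
import Mathlib

private lemma posPart_summable {X : Type*} {g : X → ℝ} (hg : Summable g) :
    Summable (fun x => max (g x) 0) :=
  Summable.of_nonneg_of_le (fun x => le_max_right _ _)
    (fun x => max_le (le_abs_self _) (abs_nonneg _)) hg.abs

private lemma negPart_summable {X : Type*} {g : X → ℝ} (hg : Summable g) :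
    Summable (fun x => max (-g x) 0) :=
  Summable.of_nonneg_of_le (fun x => le_max_right _ _)
    (fun x => max_le (neg_le_abs _) (abs_nonneg _)) hg.abs

/-- If `∑ g = 0`, then `(1/2) ∑ |g| = ∑ g⁺`. -/
private lemma half_abs_tsum {X : Type*} {g : X → ℝ} (hg : Summable g)
    (h0 : ∑' x, g x = 0) :
    (1 / 2) * ∑' x, |g x| = ∑' x, max (g x) 0 := by
  have habs : (∑' x, |g x|) = (∑' x, max (g x) 0) + ∑' x, max (-g x) 0 := by
    rw [← Summable.tsum_add (posPart_summable hg) (negPart_summable hg)]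
    refine tsum_congr fun x => ?_
    rcases le_total (g x) 0 with h | h
    · rw [abs_of_nonpos h, max_eq_right h, max_eq_left (by linarith), zero_add]
    · rw [abs_of_nonneg h, max_eq_left h, max_eq_right (by linarith), add_zero]
  have hdiff : (∑' x, max (g x) 0) - ∑' x, max (-g x) 0 = 0 := by
    rw [← Summable.tsum_sub (posPart_summable hg) (negPart_summable hg)]
    have : (fun x => max (g x) 0 - max (-g x) 0) = g := by
      funext x
      rcases le_total (g x) 0 with h | h
      · rw [max_eq_right h, max_eq_left (by linarith)]; ring
      · rw [max_eq_left h, max_eq_right (by linarith)]; ring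
    rw [this, h0]
  linarith

/-- For any set `A`, `∑_{A} g ≤ ∑ g⁺`. -/
private lemma tsum_subtype_le_posPart {X : Type*} {g : X → ℝ} (hg : Summable g)
    (A : Set X) : (∑' x : A, g x) ≤ ∑' x, max (g x) 0 := by
  rw [tsum_subtype]
  refine Summable.tsum_le_tsum (fun x => ?_) (hg.indicator A) (posPart_summable hg)
  by_cases hx : x ∈ A
  · simp [Set.indicator_of_mem hx, le_max_left]
  · simp [Set.indicator_of_notMem hx, le_max_right]

/-- `∑_{g > 0} g = ∑ g⁺`. -/
private lemma tsum_pos_set {X : Type*} (g : X → ℝ) :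
    (∑' x : {x | 0 < g x}, g x) = ∑' x, max (g x) 0 := by
  rw [tsum_subtype]
  refine tsum_congr fun x => ?_
  by_cases hx : 0 < g x
  · rw [Set.indicator_of_mem (show x ∈ {x | 0 < g x} from hx), max_eq_left hx.le]
  · rw [Set.indicator_of_notMem (show x ∉ {x | 0 < g x} from hx),
      max_eq_right (not_lt.mp hx)]

/-- **Proposition 1.10, first statement.**
For probability distributions `P, Hi, Hj` on a countable set `X` and the Scheffé set
`S = {x | Hi x < Hj x}`, we have
`d_TV(P, Hj) ≤ d_TV(P, Hi) + |Hj(S) − P(S)| + |Hi(S) − P(S)|`,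
where `d_TV(P, Q) = (1/2) · Σ_x |P x − Q x|` and `Q(S) = Σ_{x∈S} Q x`. -/
theorem semidist_approx_first {X : Type*} [Countable X]
    (P Hi Hj : X → ℝ)
    (hP0 : ∀ x, 0 ≤ P x) (hPs : Summable P) (hP1 : ∑' x, P x = 1)
    (hHi0 : ∀ x, 0 ≤ Hi x) (hHis : Summable Hi) (hHi1 : ∑' x, Hi x = 1)
    (hHj0 : ∀ x, 0 ≤ Hj x) (hHjs : Summable Hj) (hHj1 : ∑' x, Hj x = 1)
    (S : Set X) (hS : S = {x | Hi x < Hj x}) :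
    (1 / 2) * ∑' x, |P x - Hj x| ≤
      (1 / 2) * (∑' x, |P x - Hi x|)
        + |(∑' x : S, Hj x) - (∑' x : S, P x)|
        + |(∑' x : S, Hi x) - (∑' x : S, P x)| := by
  set T : Set X := {x | 0 < Hj x - P x} with hT
  -- g = Hj - P
  have hgj : Summable (fun x => Hj x - P x) := hHjs.sub hPs
  have hgi : Summable (fun x => Hi x - P x) := hHis.sub hPs
  have hgji : Summable (fun x => Hj x - Hi x) := hHjs.sub hHis
  have h0j : ∑' x, (Hj x - P x) = 0 := by rw [Summable.tsum_sub hHjs hPs, hHj1, hP1]; ring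
  have h0i : ∑' x, (Hi x - P x) = 0 := by rw [Summable.tsum_sub hHis hPs, hHi1, hP1]; ring
  -- LHS = ∑_T (Hj - P)
  have hL : (1 / 2) * ∑' x, |P x - Hj x| = ∑' x : T, (Hj x - P x) := by
    rw [tsum_pos_set fun x => Hj x - P x, ← half_abs_tsum hgj h0j]
    congr 1
    exact tsum_congr fun x => abs_sub_comm _ _
  -- split ∑_T (Hj - P) = ∑_T (Hj - Hi) + ∑_T (Hi - P)
  have hsplitT : (∑' x : T, (Hj x - P x))
      = (∑' x : T, (Hj x - Hi x)) + ∑' x : T, (Hi x - P x) := by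
    have sA : Summable (fun x : T => Hj x.1 - Hi x.1) := hgji.subtype T
    have sB : Summable (fun x : T => Hi x.1 - P x.1) := hgi.subtype T
    rw [← Summable.tsum_add sA sB]
    exact tsum_congr fun x => by ring
  -- ∑_T (Hj - Hi) ≤ ∑_S (Hj - Hi)
  have hSeq : S = {x | 0 < Hj x - Hi x} := by
    rw [hS]; ext x; simp [sub_pos]
  have h1 : (∑' x : T, (Hj x - Hi x)) ≤ ∑' x : S, (Hj x - Hi x) := by
    rw [hSeq, tsum_pos_set fun x => Hj x - Hi x]
    exact tsum_subtype_le_posPart hgji T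
  -- ∑_T (Hi - P) ≤ (1/2) ∑ |P - Hi|
  have h2 : (∑' x : T, (Hi x - P x)) ≤ (1 / 2) * ∑' x, |P x - Hi x| := by
    have := tsum_subtype_le_posPart hgi T
    rw [← half_abs_tsum hgi h0i] at this
    calc (∑' x : T, (Hi x - P x)) ≤ (1 / 2) * ∑' x, |Hi x - P x| := this
      _ = (1 / 2) * ∑' x, |P x - Hi x| := by
          congr 1; exact tsum_congr fun x => abs_sub_comm _ _
  -- ∑_S (Hj - Hi) = ∑_S Hj - ∑_S Hi
  have h3 : (∑' x : S, (Hj x - Hi x)) = (∑' x : S, Hj x) - ∑' x : S, Hi x :=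
    Summable.tsum_sub (hHjs.subtype S) (hHis.subtype S)
  have h4 : (∑' x : S, Hj x) - (∑' x : S, Hi x)
      ≤ |(∑' x : S, Hj x) - (∑' x : S, P x)| + |(∑' x : S, Hi x) - (∑' x : S, P x)| := by
    have a1 := le_abs_self ((∑' x : S, Hj x) - (∑' x : S, P x))
    have a2 := neg_abs_le ((∑' x : S, Hi x) - (∑' x : S, P x))
    linarith
  linarith
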